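/- Let α > 0, m = ⌈α⌉, and suppose f : [a,b] → ℝ is such that f^{(m-1)} is absolutely continuous on [a,b] and f^{(k)}(b) = 0 for k = 1, ..., m-1. Then for every x ∈ [a,b], f(x) - f(b) = (1/Γ(α)) ∫_x^b (t-x)^{α-1} D_{b-}^α f(t) dt. -/

import Mathlib

/-
Write `I^p` for the right Riemann–Liouville integral
`I^p φ (x) = Γ(p)⁻¹ ∫_x^b (t-x)^{p-1} φ(t) dt`.
Since `D^α f = (-1)^m I^{m-α} f^{(m)}` (or `(-1)^m f^{(m)}` when `α = m`), the semigroup law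
`I^α I^{m-α} = I^m` reduces the claim to Taylor's formula at `b` with integral remainder,
`f x - f b = (-1)^m I^m f^{(m)} (x)`, whose boundary terms vanish by hypothesis. Taylor's formula
follows by induction from `f^{(k)} = -I^1 f^{(k+1)}` and the same semigroup law. The semigroup law
itself is Fubini on the triangle `x < t < s < b` together with the Beta integral
`∫_x^s (t-x)^{p-1} (s-t)^{q-1} dt = B(p,q) (s-x)^{p+q-1}`.
-/

open MeasureTheory intervalIntegral

/-- `f ∈ AC^m([a,b])`: `f` is `(m-1)`-times continuously differentiable on `[a,b]` and
`f^{(m-1)}` is absolutely continuous on `[a,b]`, i.e. `f^{(m-1)}` is recovered by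
integrating its (a.e.) derivative `f^{(m)}`, which is integrable on `[a,b]`. -/
def IsACDeriv (m : ℕ) (a b : ℝ) (f : ℝ → ℝ) : Prop :=
  ContDiffOn ℝ (m - 1 : ℕ) f (Set.Icc a b) ∧
  IntervalIntegrable (iteratedDerivWithin m f (Set.Icc a b)) MeasureTheory.volume a b ∧
  ∀ x ∈ Set.Icc a b,
    iteratedDerivWithin (m - 1) f (Set.Icc a b) x
      = iteratedDerivWithin (m - 1) f (Set.Icc a b) a
        + ∫ t in a..x, iteratedDerivWithin m f (Set.Icc a b) t

/-- The right Caputo fractional derivative `D_{b-}^α f` of order `α > 0` of `f` on `[a,b]`: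
with `m = ⌈α⌉`, it is `((-1)^m / Γ(m-α)) ∫_x^b (t-x)^{m-α-1} f^{(m)}(t) dt` when `α ∉ ℕ`,
and `(-1)^m f^{(m)}(x)` when `α = m ∈ ℕ`. -/
noncomputable def rightCaputoDeriv (α a b : ℝ) (f : ℝ → ℝ) (x : ℝ) : ℝ :=
  if α = (⌈α⌉₊ : ℝ) then
    (-1 : ℝ) ^ (⌈α⌉₊ : ℕ) * iteratedDerivWithin ⌈α⌉₊ f (Set.Icc a b) x
  else
    ((-1 : ℝ) ^ (⌈α⌉₊ : ℕ) / Real.Gamma ((⌈α⌉₊ : ℝ) - α)) *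
      ∫ t in x..b, (t - x) ^ ((⌈α⌉₊ : ℝ) - α - 1) * iteratedDerivWithin ⌈α⌉₊ f (Set.Icc a b) t

open Set
open ProbabilityTheory (beta beta_pos)

theorem Set.Iio_inter_Ioc_of_le {α : Type*} [LinearOrder α] {a b c : α} (hc : c ≤ b) :
    Iio c ∩ Ioc a b = Ioo a c := by
  ext t
  simp only [mem_inter_iff, mem_Iio, mem_Ioc, mem_Ioo]
  constructor
  · rintro ⟨htc, hat, -⟩
    exact ⟨hat, htc⟩
  · rintro ⟨hat, htc⟩
    exact ⟨htc, hat, htc.le.trans hc⟩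

section Beta

variable {p q : ℝ}

theorem integral_rpow_mul_sub_rpow (hp : 0 < p) (hq : 0 < q) {c : ℝ} (hc : 0 < c) :
    ∫ u in 0..c, u ^ (p - 1) * (c - u) ^ (q - 1) = beta p q * c ^ (p + q - 1) := by
  have hscaled := Complex.betaIntegral_scaled p q hc
  rw [Complex.betaIntegral_eq_Gamma_mul_div _ _ (by simpa) (by simpa), ← Complex.ofReal_add,
    Complex.Gamma_ofReal, Complex.Gamma_ofReal, Complex.Gamma_ofReal] at hscaled
  apply Complex.ofReal_injective
  rw [← integral_ofReal, beta, mul_comm, Complex.ofReal_mul, Complex.ofReal_cpow hc.le]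
  push_cast at hscaled ⊢
  rw [← hscaled]
  refine integral_congr fun u hu => ?_
  rw [uIcc_of_le hc.le] at hu
  rw [Complex.ofReal_cpow hu.1, Complex.ofReal_cpow (sub_nonneg.2 hu.2)]
  push_cast
  rfl

theorem integral_sub_rpow_mul_sub_rpow (hp : 0 < p) (hq : 0 < q) {x s : ℝ} (hxs : x < s) :
    ∫ t in x..s, (t - x) ^ (p - 1) * (s - t) ^ (q - 1) = beta p q * (s - x) ^ (p + q - 1) := by
  have hshift := integral_comp_sub_right (fun u => u ^ (p - 1) * (s - x - u) ^ (q - 1)) x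
    (a := x) (b := s)
  simp only [sub_self, sub_sub_sub_cancel_right] at hshift
  rw [hshift, integral_rpow_mul_sub_rpow hp hq (sub_pos.2 hxs)]

theorem intervalIntegrable_sub_rpow_mul_sub_rpow (hp : 0 < p) (hq : 0 < q) {x s : ℝ}
    (hxs : x < s) :
    IntervalIntegrable (fun t => (t - x) ^ (p - 1) * (s - t) ^ (q - 1)) volume x s := by
  -- a non-integrable function has interval integral `0`, while the Beta integral is positive
  refine intervalIntegrable_of_integral_ne_zero ?_
  rw [integral_sub_rpow_mul_sub_rpow hp hq hxs]
  exact (mul_pos (beta_pos hp hq) (Real.rpow_pos_of_pos (sub_pos.2 hxs) _)).ne'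

end Beta

section Dirichlet

variable {p q x b : ℝ}

noncomputable def triangleKernel (p q x : ℝ) (ψ : ℝ → ℝ) : ℝ × ℝ → ℝ :=
  {z | z.1 < z.2}.indicator fun z => (z.1 - x) ^ (p - 1) * (z.2 - z.1) ^ (q - 1) * ψ z.2

theorem triangleKernel_slice_fst (ψ : ℝ → ℝ) (s : ℝ) :
    (fun t => triangleKernel p q x ψ (t, s))
      = (Iio s).indicator fun t => (t - x) ^ (p - 1) * (s - t) ^ (q - 1) * ψ s := by
  ext t
  simp [triangleKernel, indicator]

theorem integral_triangleKernel_fst (hp : 0 < p) (hq : 0 < q) (ψ : ℝ → ℝ) {s : ℝ}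
    (hs : s ∈ Ioc x b) :
    ∫ t in Ioc x b, triangleKernel p q x ψ (t, s) = beta p q * (s - x) ^ (p + q - 1) * ψ s := by
  rw [triangleKernel_slice_fst, MeasureTheory.integral_indicator measurableSet_Iio,
    Measure.restrict_restrict measurableSet_Iio, Iio_inter_Ioc_of_le hs.2,
    ← integral_Ioc_eq_integral_Ioo, MeasureTheory.integral_mul_const, ← integral_of_le hs.1.le,
    integral_sub_rpow_mul_sub_rpow hp hq hs.1]

theorem integrableOn_triangleKernel_fst (hp : 0 < p) (hq : 0 < q) (ψ : ℝ → ℝ) {s : ℝ}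
    (hs : s ∈ Ioc x b) :
    IntegrableOn (fun t => triangleKernel p q x ψ (t, s)) (Ioc x b) := by
  rw [triangleKernel_slice_fst, IntegrableOn, integrable_indicator_iff measurableSet_Iio,
    IntegrableOn, Measure.restrict_restrict measurableSet_Iio, Iio_inter_Ioc_of_le hs.2]
  exact ((intervalIntegrable_iff_integrableOn_Ioo_of_le hs.1.le).mp
    (intervalIntegrable_sub_rpow_mul_sub_rpow hp hq hs.1)).mul_const _

theorem integral_triangleKernel_snd (ψ : ℝ → ℝ) {t : ℝ} (ht : t ∈ Ioc x b) :
    ∫ s in Ioc x b, triangleKernel p q x ψ (t, s)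
      = (t - x) ^ (p - 1) * ∫ s in t..b, (s - t) ^ (q - 1) * ψ s := by
  have hslice : (fun s => triangleKernel p q x ψ (t, s))
      = (Ioi t).indicator fun s => (t - x) ^ (p - 1) * ((s - t) ^ (q - 1) * ψ s) := by
    ext s
    simp [triangleKernel, indicator, mul_assoc]
  rw [hslice, MeasureTheory.integral_indicator measurableSet_Ioi,
    Measure.restrict_restrict measurableSet_Ioi, inter_comm, Ioc_inter_Ioi, max_eq_right ht.1.le,
    MeasureTheory.integral_const_mul, ← integral_of_le ht.2]

theorem norm_triangleKernel {ψ : ℝ → ℝ} {t s : ℝ} (ht : x < t) :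
    ‖triangleKernel p q x ψ (t, s)‖ = triangleKernel p q x (fun s => |ψ s|) (t, s) := by
  by_cases hts : t < s
  · simp only [triangleKernel, indicator, mem_ofPred_eq, hts, if_true, norm_mul, Real.norm_eq_abs,
      abs_of_nonneg (Real.rpow_nonneg (sub_nonneg.2 ht.le) _),
      abs_of_nonneg (Real.rpow_nonneg (sub_nonneg.2 hts.le) _)]
  · simp [triangleKernel, hts]

theorem integrable_triangleKernel (hp : 0 < p) (hq : 0 < q) (hpq : 1 ≤ p + q) {φ : ℝ → ℝ}
    (hφ : IntegrableOn φ (Ioc x b)) :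
    Integrable (triangleKernel p q x φ)
      ((volume.restrict (Ioc x b)).prod (volume.restrict (Ioc x b))) := by
  have hmeas : AEStronglyMeasurable (triangleKernel p q x φ)
      ((volume.restrict (Ioc x b)).prod (volume.restrict (Ioc x b))) :=
    (((by fun_prop : Measurable fun z : ℝ × ℝ => (z.1 - x) ^ (p - 1) * (z.2 - z.1) ^ (q - 1))
      ).aestronglyMeasurable.mul hφ.aestronglyMeasurable.comp_snd).indicator
      (measurableSet_lt measurable_fst measurable_snd)
  refine (integrable_prod_iff' hmeas).2 ⟨?_, ?_⟩
  · filter_upwards [ae_restrict_mem measurableSet_Ioc] with s hs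
    exact integrableOn_triangleKernel_fst hp hq φ hs
  · have hbound : IntegrableOn (fun s => beta p q * (s - x) ^ (p + q - 1) * |φ s|) (Ioc x b) :=
      IntegrableOn.continuousOn_mul_of_subset (continuousOn_const.mul
        (ContinuousOn.rpow_const (by fun_prop) fun _ _ => Or.inr (by linarith)))
        hφ.norm isCompact_Icc measurableSet_Ioc Ioc_subset_Icc_self
    refine hbound.congr_fun (fun s hs => ?_) measurableSet_Ioc
    calc beta p q * (s - x) ^ (p + q - 1) * |φ s|
        = ∫ t in Ioc x b, triangleKernel p q x (fun s => |φ s|) (t, s) :=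
          (integral_triangleKernel_fst hp hq (fun s => |φ s|) hs).symm
      _ = _ := setIntegral_congr_fun measurableSet_Ioc fun t ht => (norm_triangleKernel ht.1).symm

theorem integral_mul_integral_eq_beta_mul_integral (hp : 0 < p) (hq : 0 < q) (hpq : 1 ≤ p + q)
    (hxb : x ≤ b) {φ : ℝ → ℝ} (hφ : IntegrableOn φ (Ioc x b)) :
    ∫ t in x..b, (t - x) ^ (p - 1) * ∫ s in t..b, (s - t) ^ (q - 1) * φ s
      = beta p q * ∫ s in x..b, (s - x) ^ (p + q - 1) * φ s := by
  rw [integral_of_le hxb, integral_of_le hxb, ← MeasureTheory.integral_const_mul]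
  calc ∫ t in Ioc x b, (t - x) ^ (p - 1) * ∫ s in t..b, (s - t) ^ (q - 1) * φ s
      = ∫ t in Ioc x b, ∫ s in Ioc x b, triangleKernel p q x φ (t, s) :=
        setIntegral_congr_fun measurableSet_Ioc fun t ht => (integral_triangleKernel_snd φ ht).symm
    _ = ∫ s in Ioc x b, ∫ t in Ioc x b, triangleKernel p q x φ (t, s) :=
        integral_integral_swap (integrable_triangleKernel hp hq hpq hφ)
    _ = ∫ s in Ioc x b, beta p q * ((s - x) ^ (p + q - 1) * φ s) :=
        setIntegral_congr_fun measurableSet_Ioc fun s hs => by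
          rw [integral_triangleKernel_fst hp hq φ hs, mul_assoc]

end Dirichlet

section RiemannLiouville

variable {p q b x : ℝ}

/-- The right Riemann–Liouville integral `I_{b-}^p φ`. -/
noncomputable def rightRiemannLiouville (p b : ℝ) (φ : ℝ → ℝ) (x : ℝ) : ℝ :=
  1 / Real.Gamma p * ∫ t in x..b, (t - x) ^ (p - 1) * φ t

theorem rightRiemannLiouville_one (φ : ℝ → ℝ) :
    rightRiemannLiouville 1 b φ x = ∫ t in x..b, φ t := by
  simp [rightRiemannLiouville]

theorem rightRiemannLiouville_const_mul (c : ℝ) (φ : ℝ → ℝ) :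
    rightRiemannLiouville p b (fun t => c * φ t) x = c * rightRiemannLiouville p b φ x := by
  simp only [rightRiemannLiouville, mul_left_comm _ c, intervalIntegral.integral_const_mul]

theorem rightRiemannLiouville_congr {φ ψ : ℝ → ℝ} (h : EqOn φ ψ (Icc x b)) (hxb : x ≤ b) :
    rightRiemannLiouville p b φ x = rightRiemannLiouville p b ψ x := by
  unfold rightRiemannLiouville
  congr 1
  refine integral_congr fun t ht => ?_
  rw [uIcc_of_le hxb] at ht
  simp only [h ht]

theorem rightRiemannLiouville_add (hp : 0 < p) (hq : 0 < q) (hpq : 1 ≤ p + q) (hxb : x ≤ b)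
    {φ : ℝ → ℝ} (hφ : IntegrableOn φ (Ioc x b)) :
    rightRiemannLiouville (p + q) b φ x
      = rightRiemannLiouville p b (rightRiemannLiouville q b φ) x := by
  simp only [rightRiemannLiouville, mul_left_comm _ (1 / Real.Gamma q),
    intervalIntegral.integral_const_mul,
    integral_mul_integral_eq_beta_mul_integral hp hq hpq hxb hφ, beta]
  have := (Real.Gamma_pos_of_pos hp).ne'
  have := (Real.Gamma_pos_of_pos hq).ne'
  have := (Real.Gamma_pos_of_pos (add_pos hp hq)).ne'
  field_simp

end RiemannLiouville

theorem ContDiffOn.iteratedDerivWithin_eq_add_integral {f : ℝ → ℝ} {a b : ℝ} {n : ℕ}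
    (hf : ContDiffOn ℝ (n + 1 : ℕ) f (Icc a b)) (hab : a < b) {y : ℝ} (hy : y ∈ Icc a b) :
    iteratedDerivWithin n f (Icc a b) y
      = iteratedDerivWithin n f (Icc a b) a
        + ∫ t in a..y, iteratedDerivWithin (n + 1) f (Icc a b) t := by
  have hu := uniqueDiffOn_Icc hab
  have hd : DifferentiableOn ℝ (iteratedDerivWithin n f (Icc a b)) (Icc a b) :=
    hf.differentiableOn_iteratedDerivWithin (by norm_cast; omega) hu
  have hc : ContinuousOn (iteratedDerivWithin (n + 1) f (Icc a b)) (Icc a b) :=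
    hf.continuousOn_iteratedDerivWithin le_rfl hu
  have hsub : Icc a y ⊆ Icc a b := Icc_subset_Icc_right hy.2
  rw [integral_eq_sub_of_hasDeriv_right_of_le hy.1 (hd.continuousOn.mono hsub) (fun t ht => ?_)
    ((hc.mono hsub).intervalIntegrable_of_Icc hy.1), add_sub_cancel]
  have ht' : t ∈ Ioo a b := ⟨ht.1, ht.2.trans_le hy.2⟩
  rw [iteratedDerivWithin_succ]
  exact ((hd t (Ioo_subset_Icc_self ht')).hasDerivWithinAt.hasDerivAt
    (Icc_mem_nhds ht'.1 ht'.2)).hasDerivWithinAt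

namespace IsACDeriv

variable {m : ℕ} {a b : ℝ} {f : ℝ → ℝ}

theorem intervalIntegrable_iteratedDerivWithin (hf : IsACDeriv m a b f) (hab : a < b) {k : ℕ}
    (hk : k ≤ m) : IntervalIntegrable (iteratedDerivWithin k f (Icc a b)) volume a b := by
  rcases hk.eq_or_lt with rfl | hk
  · exact hf.2.1
  · exact (hf.1.continuousOn_iteratedDerivWithin (by norm_cast; omega)
      (uniqueDiffOn_Icc hab)).intervalIntegrable_of_Icc hab.le

theorem iteratedDerivWithin_eq_add_integral (hf : IsACDeriv m a b f) (hab : a < b) {k : ℕ}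
    (hk : k < m) {y : ℝ} (hy : y ∈ Icc a b) :
    iteratedDerivWithin k f (Icc a b) y
      = iteratedDerivWithin k f (Icc a b) a
        + ∫ t in a..y, iteratedDerivWithin (k + 1) f (Icc a b) t := by
  rcases (Nat.succ_le_of_lt hk).eq_or_lt with hkm | hkm
  · obtain rfl : k = m - 1 := by omega
    rw [Nat.sub_add_cancel (by omega)]
    exact hf.2.2 y hy
  · exact (hf.1.of_le (by norm_cast; omega)).iteratedDerivWithin_eq_add_integral hab hy

theorem iteratedDerivWithin_sub_eq_integral (hf : IsACDeriv m a b f) (hab : a < b) {k : ℕ}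
    (hk : k < m) {s : ℝ} (hs : s ∈ Icc a b) :
    iteratedDerivWithin k f (Icc a b) b - iteratedDerivWithin k f (Icc a b) s
      = ∫ t in s..b, iteratedDerivWithin (k + 1) f (Icc a b) t := by
  have hint := hf.intervalIntegrable_iteratedDerivWithin hab hk
  rw [hf.iteratedDerivWithin_eq_add_integral hab hk (right_mem_Icc.2 hab.le),
    hf.iteratedDerivWithin_eq_add_integral hab hk hs, add_sub_add_left_eq_sub,
    integral_interval_sub_left hint
      (hint.mono_set (uIcc_subset_uIcc_left (by rwa [uIcc_of_le hab.le])))]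

theorem integrableOn_iteratedDerivWithin (hf : IsACDeriv m a b f) (hab : a < b) {k : ℕ}
    (hk : k ≤ m) {x : ℝ} (hx : x ∈ Icc a b) :
    IntegrableOn (iteratedDerivWithin k f (Icc a b)) (Ioc x b) :=
  (hf.intervalIntegrable_iteratedDerivWithin hab hk).1.mono_set (Ioc_subset_Ioc_left hx.1)

theorem sub_eq_rightRiemannLiouville (hf : IsACDeriv m a b f) (hab : a < b)
    (hfb : ∀ k : ℕ, 1 ≤ k → k < m → iteratedDerivWithin k f (Icc a b) b = 0) {k : ℕ}
    (hk : 1 ≤ k) (hkm : k ≤ m) {x : ℝ} (hx : x ∈ Icc a b) :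
    f x - f b = (-1) ^ k * rightRiemannLiouville k b (iteratedDerivWithin k f (Icc a b)) x := by
  induction k, hk using Nat.le_induction with
  | base =>
    rw [Nat.cast_one, rightRiemannLiouville_one,
      ← hf.iteratedDerivWithin_sub_eq_integral hab hkm hx]
    simp [iteratedDerivWithin_zero]
  | succ k hk ih =>
    have hkm' : k < m := by omega
    have hFk : EqOn (iteratedDerivWithin k f (Icc a b))
        (fun s => -1 * rightRiemannLiouville 1 b (iteratedDerivWithin (k + 1) f (Icc a b)) s)
        (Icc x b) := fun s hs => by
      dsimp only
      rw [rightRiemannLiouville_one, ← hf.iteratedDerivWithin_sub_eq_integral hab hkm'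
        ⟨hx.1.trans hs.1, hs.2⟩, hfb k hk hkm']
      ring
    rw [ih hkm'.le, rightRiemannLiouville_congr hFk hx.2, rightRiemannLiouville_const_mul,
      ← rightRiemannLiouville_add (by positivity) one_pos (by linarith) hx.2
        (hf.integrableOn_iteratedDerivWithin hab hkm hx)]
    push_cast
    ring

end IsACDeriv

theorem rightCaputoDeriv_of_eq_ceil {α a b : ℝ} {f : ℝ → ℝ} (h : α = ⌈α⌉₊) :
    rightCaputoDeriv α a b f
      = fun t => (-1) ^ ⌈α⌉₊ * iteratedDerivWithin ⌈α⌉₊ f (Icc a b) t := by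
  ext t
  rw [rightCaputoDeriv, if_pos h]

theorem rightCaputoDeriv_of_ne_ceil {α a b : ℝ} {f : ℝ → ℝ} (h : α ≠ ⌈α⌉₊) :
    rightCaputoDeriv α a b f = fun t => (-1) ^ ⌈α⌉₊ *
      rightRiemannLiouville (⌈α⌉₊ - α) b (iteratedDerivWithin ⌈α⌉₊ f (Icc a b)) t := by
  ext t
  rw [rightCaputoDeriv, if_neg h, rightRiemannLiouville]
  ring

/-- If `f ∈ AC^m([a,b])` with `m = ⌈α⌉` and `f⁽ᵏ⁾(b) = 0` for `k = 1, …, m-1`, then for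
every `x ∈ [a,b]`, `f(x) - f(b) = (1/Γ(α)) ∫_x^b (t-x)^{α-1} D_{b-}^α f(t) dt`. -/
theorem rightCaputo_sub_eq_integral (α : ℝ) (hα : 0 < α) (a b : ℝ) (hab : a < b) (f : ℝ → ℝ)
    (hf : IsACDeriv ⌈α⌉₊ a b f)
    (hfb : ∀ k : ℕ, 1 ≤ k → k < ⌈α⌉₊ → iteratedDerivWithin k f (Set.Icc a b) b = 0)
    (x : ℝ) (hx : x ∈ Set.Icc a b) :
    f x - f b = (1 / Real.Gamma α) * ∫ t in x..b, (t - x) ^ (α - 1) * rightCaputoDeriv α a b f t := by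
  set m := ⌈α⌉₊
  have hm : 1 ≤ m := Nat.one_le_iff_ne_zero.2 (Nat.ceil_pos.2 hα).ne'
  change f x - f b = rightRiemannLiouville α b (rightCaputoDeriv α a b f) x
  rw [hf.sub_eq_rightRiemannLiouville hab hfb hm le_rfl hx]
  by_cases h : α = m
  · rw [rightCaputoDeriv_of_eq_ceil h, rightRiemannLiouville_const_mul, ← h]
  · rw [rightCaputoDeriv_of_ne_ceil h, rightRiemannLiouville_const_mul,
      ← rightRiemannLiouville_add hα (sub_pos.2 ((Nat.le_ceil α).lt_of_ne h))
        (by rw [add_sub_cancel]; exact_mod_cast hm) hx.2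
        (hf.integrableOn_iteratedDerivWithin hab le_rfl hx), add_sub_cancel]
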